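/- Let f be a piecewise contracting interval map with D ⊂ X̃, and let x ∈ X̃ have a periodic itinerary of period p. Then ω(x) is a finite set {x₀*, ..., x_{p-1}*}, where for each k, x_k* is the unique point of the nested intersection of atoms ⋂_{j≥1} A_{θ_k,...,θ_{k+jp-1}} determined by the itinerary θ of x. -/

import Mathlib

open Filter Topology Set

/-- A piecewise contracting interval map on `X = [c 0, c N]` with contraction pieces
`X_i` delimited by the points `c 0 < c 1 < … < c N`, contraction rate `lam ∈ (0,1)`,
and `fe i` the (unique) continuous `lam`-Lipschitz extension of `f` restricted to the
`i`-th piece to its closure `[c (i-1), c i]`. The pieces are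
`X_1 = [c 0, c 1)`, `X_i = (c (i-1), c i)` for `1 < i < N`, `X_N = (c (N-1), c N]`. -/
structure PCIM where
  N : ℕ
  hN : 2 ≤ N
  c : ℕ → ℝ
  lam : ℝ
  f : ℝ → ℝ
  fe : ℕ → ℝ → ℝ
  hc : StrictMonoOn c (Set.Iic N)
  hlam : lam ∈ Set.Ioo (0 : ℝ) 1
  hmap : Set.MapsTo f (Set.Icc (c 0) (c N)) (Set.Icc (c 0) (c N))
  hfe_lip : ∀ i, 1 ≤ i → i ≤ N →
    ∀ x ∈ Set.Icc (c (i - 1)) (c i), ∀ y ∈ Set.Icc (c (i - 1)) (c i),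
      |fe i x - fe i y| ≤ lam * |x - y|
  hfe_eq : ∀ i, 1 ≤ i → i ≤ N → ∀ x ∈ Set.Ioo (c (i - 1)) (c i), fe i x = f x
  hfe_left : fe 1 (c 0) = f (c 0)
  hfe_right : fe N (c N) = f (c N)

namespace PCIM

variable (P : PCIM)

/-- The phase space `X = [c 0, c N]`. -/
def X : Set ℝ := Set.Icc (P.c 0) (P.c P.N)

/-- The `i`-th contraction piece (`1 ≤ i ≤ N`). -/
def piece (i : ℕ) : Set ℝ :=
  Set.Ioo (P.c (i - 1)) (P.c i)
    ∪ (if i = 1 then {P.c 0} else (∅ : Set ℝ))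
    ∪ (if i = P.N then {P.c P.N} else (∅ : Set ℝ))

/-- `Δ`, the set of interior boundary points of the pieces. -/
def Δ : Set ℝ := {y | ∃ i, 1 ≤ i ∧ i < P.N ∧ y = P.c i}

/-- `X̃ = ⋂ n, f⁻ⁿ(X \ Δ)`: points whose whole forward orbit stays in `X` and avoids `Δ`. -/
def Xt : Set ℝ := {x | ∀ n : ℕ, P.f^[n] x ∈ P.X \ P.Δ}

/-- Forward orbit of `x`. -/
def orbit (x : ℝ) : Set ℝ := Set.range fun n : ℕ => P.f^[n] x

/-- The ω-limit set of `x`: limits of subsequences of the forward orbit. -/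
def omega (x : ℝ) : Set ℝ :=
  {y | ∃ φ : ℕ → ℕ, StrictMono φ ∧
    Filter.Tendsto (fun n => P.f^[φ n] x) Filter.atTop (nhds y)}

/-- `d_i^- = f_i (c_i)`, the left lateral limit of `f` at `c i`. -/
def dminus (i : ℕ) : ℝ := P.fe i (P.c i)

/-- `d_i^+ = f_{i+1} (c_i)`, the right lateral limit of `f` at `c i`. -/
def dplus (i : ℕ) : ℝ := P.fe (i + 1) (P.c i)

/-- `D⁻ = {d_1^-, …, d_{N-1}^-}`. -/
def Dminus : Set ℝ := {y | ∃ i, 1 ≤ i ∧ i < P.N ∧ y = P.dminus i}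

/-- `D⁺ = {d_1^+, …, d_{N-1}^+}`. -/
def Dplus : Set ℝ := {y | ∃ i, 1 ≤ i ∧ i < P.N ∧ y = P.dplus i}

/-- `D`, the set of all one-sided limits of `f` at endpoints of the pieces. -/
def D : Set ℝ := P.Dminus ∪ P.Dplus ∪ {P.fe 1 (P.c 0), P.fe P.N (P.c P.N)}

/-- `A` is pseudo-invariant: for every `x ∈ A` at least one one-sided limit of `f`
at `x` (i.e. some `fe i x` with `x` in the closure of the `i`-th piece) belongs to `A`. -/
def PseudoInvariant (A : Set ℝ) : Prop :=
  ∀ x ∈ A, ∃ i, 1 ≤ i ∧ i ≤ P.N ∧ x ∈ Set.Icc (P.c (i - 1)) (P.c i) ∧ P.fe i x ∈ A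

/-- `F_i(A) = closure (f (A ∩ X_i))`. -/
def Fmap (i : ℕ) (A : Set ℝ) : Set ℝ := closure (P.f '' (A ∩ P.piece i))

/-- For a word `w = [i_1, …, i_n]`, the set `F_{i_n} ∘ … ∘ F_{i_1} (X)`. -/
def atomOf (w : List ℕ) : Set ℝ := w.foldl (fun S i => P.Fmap i S) P.X

/-- `A` is an atom of generation `n`. -/
def IsAtomGen (n : ℕ) (A : Set ℝ) : Prop :=
  ∃ w : List ℕ, w.length = n ∧ (∀ i ∈ w, 1 ≤ i ∧ i ≤ P.N) ∧
    A = P.atomOf w ∧ A.Nonempty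

/-- `Lam n` is `Λ_{n+1}` of the paper: `Λ_1 = closure (f(X \ Δ))`,
`Λ_{n+1} = closure (f(Λ_n \ Δ))`. -/
def Lam (P : PCIM) : ℕ → Set ℝ
  | 0 => closure (P.f '' (P.X \ P.Δ))
  | n + 1 => closure (P.f '' (P.Lam n \ P.Δ))

/-- The attractor `Λ = ⋂_{n ≥ 1} Λ_n`. -/
def attractor : Set ℝ := ⋂ n : ℕ, P.Lam n

/-- `c i ∈ Δ_lr(x)`: the boundary point `c i` is left-right recurrently visited by the
orbit of `x`. -/
def lrVisited (x : ℝ) (i : ℕ) : Prop :=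
  1 ≤ i ∧ i < P.N ∧
  ∃ l r : ℕ → ℕ, StrictMono l ∧ StrictMono r ∧
    (∀ j, P.f^[l j] x ∈ P.piece i) ∧ (∀ j, P.f^[r j] x ∈ P.piece (i + 1)) ∧
    Filter.Tendsto (fun j => P.f^[l j] x) Filter.atTop (nhds (P.c i)) ∧
    Filter.Tendsto (fun j => P.f^[r j] x) Filter.atTop (nhds (P.c i))

/-- `c i ∈ Δ_lr`: `c i` is left-right recurrently visited by the orbit of some point
of `X̃`. -/
def inΔlr (i : ℕ) : Prop := ∃ x ∈ P.Xt, P.lrVisited x i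

/-- The set `Δ_lr ⊆ Δ`. -/
def ΔlrSet : Set ℝ := {y | ∃ i, P.inΔlr i ∧ y = P.c i}

/-- The relation `∼⁺` on `Δ_lr`: `c_i ∼⁺ c_j` iff `c_i = c_j` or
(`c_i ∈ Δ_lr(d_j^+)` and `c_j ∈ Δ_lr(d_i^+)`). -/
def simP (a b : ℝ) : Prop :=
  a = b ∨ ∃ i j, P.inΔlr i ∧ P.inΔlr j ∧ a = P.c i ∧ b = P.c j ∧
    P.lrVisited (P.dplus j) i ∧ P.lrVisited (P.dplus i) j

/-- The relation `≼⁺` (on representatives): `[c_i] ≼⁺ [c_j]` iff `[c_i] = [c_j]` or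
`c_i ∈ Δ_lr(d_j^+)`. -/
def preP (a b : ℝ) : Prop :=
  P.simP a b ∨ ∃ i j, P.inΔlr i ∧ P.inΔlr j ∧ a = P.c i ∧ b = P.c j ∧
    P.lrVisited (P.dplus j) i

/-- `[c i]` is a minimal class for the partial order `≼⁺`. -/
def MinimalClass (i : ℕ) : Prop :=
  P.inΔlr i ∧ ∀ j, P.inΔlr j → P.preP (P.c j) (P.c i) → P.simP (P.c j) (P.c i)

/-- `f` is injective on each contraction piece. -/
def InjPieces : Prop := ∀ i, 1 ≤ i → i ≤ P.N → Set.InjOn P.f (P.piece i)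

/-- `f` is (strictly) increasing on each contraction piece. -/
def IncrPieces : Prop := ∀ i, 1 ≤ i → i ≤ P.N → StrictMonoOn P.f (P.piece i)

/-- `x` is a periodic point of `f`. -/
def IsPeriodic (x : ℝ) : Prop := ∃ p : ℕ, 1 ≤ p ∧ P.f^[p] x = x

/-- `η` is the itinerary of `x`: `f^[n] x ∈ X_{η n}` for all `n`. -/
def IsItinerary (x : ℝ) (η : ℕ → ℕ) : Prop :=
  ∀ n, 1 ≤ η n ∧ η n ≤ P.N ∧ P.f^[n] x ∈ P.piece (η n)

end PCIM

/-- The word of length `n` of the sequence `η` starting at position `t`. -/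
def wordAt (η : ℕ → ℕ) (t n : ℕ) : List ℕ := (List.range n).map fun m => η (t + m)

/-- The complexity function of the sequence `η`: the number of distinct words of
length `n` occurring in `η`. -/
noncomputable def complexity (η : ℕ → ℕ) (n : ℕ) : ℕ := Set.ncard {w : List ℕ | ∃ t, w = wordAt η t n}

/-! Periodicity of `θ` makes the atoms `A_{θ_k, …, θ_{k+jp-1}}` decrease in `j`; since each
letter contracts by `λ`, their diameters are at most `λ^{jp} diam X`, so they shrink to a single
point `x_k*`, and the orbit points `f^{k+jp}(x)`, which lie in them, converge to `x_k*`.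
Every time along a subsequence of the orbit falls infinitely often into one residue class `k`
modulo `p`, so every point of `ω(x)` is one of the `x_k*`. -/

theorem exists_iInter_eq_singleton_of_tendsto_diam {α : Type*} [MetricSpace α] [CompleteSpace α]
    {K : ℕ → Set α} (hanti : Antitone K) (hclosed : ∀ j, IsClosed (K j))
    (hbdd : ∀ j, Bornology.IsBounded (K j)) {z : ℕ → α} (hz : ∀ j, z j ∈ K j)
    (hdiam : Tendsto (fun j => Metric.diam (K j)) atTop (𝓝 0)) :
    ∃ y, ⋂ j, K j = {y} ∧ Tendsto z atTop (𝓝 y) := by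
  obtain ⟨y, hy⟩ := Metric.nonempty_iInter_of_nonempty_biInter hclosed hbdd
    (fun N => ⟨z N, mem_iInter₂.2 fun _ hn => hanti hn (hz N)⟩) hdiam
  have hconv : ∀ w : ℕ → α, (∀ j, w j ∈ K j) → Tendsto w atTop (𝓝 y) := fun w hw =>
    tendsto_iff_dist_tendsto_zero.2 <| squeeze_zero (fun _ => dist_nonneg)
      (fun j => Metric.dist_le_diam_of_mem (hbdd j) (hw j) (mem_iInter.1 hy j)) hdiam
  refine ⟨y, eq_singleton_iff_unique_mem.2 ⟨hy, fun w hw => ?_⟩, hconv z hz⟩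
  exact tendsto_nhds_unique tendsto_const_nhds (hconv _ fun j => mem_iInter.1 hw j)

theorem tendsto_comp_of_eventually_mod_eq {α ι : Type*} [TopologicalSpace α] {u : ℕ → α}
    {p b : ℕ} {a : α} (hp : 0 < p) (hu : Tendsto (fun m => u (b + m * p)) atTop (𝓝 a))
    {l : Filter ι} {t : ι → ℕ} (ht : Tendsto t l atTop) (hb : ∀ᶠ i in l, t i % p = b) :
    Tendsto (u ∘ t) l (𝓝 a) := by
  refine (hu.comp ((Nat.tendsto_div_const_atTop hp.ne').comp ht)).congr' ?_
  filter_upwards [hb] with i hi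
  simp only [Function.comp_apply, ← hi, Nat.mod_add_div' (t i) p]

theorem exists_eq_of_tendsto_comp_strictMono {α : Type*} [TopologicalSpace α] [T2Space α]
    {u : ℕ → α} {p : ℕ} (hp : 0 < p) {a : ℕ → α}
    (ha : ∀ b, Tendsto (fun m => u (b + m * p)) atTop (𝓝 (a b)))
    {φ : ℕ → ℕ} (hφ : StrictMono φ) {z : α} (hz : Tendsto (u ∘ φ) atTop (𝓝 z)) :
    ∃ b : Fin p, z = a b := by
  obtain ⟨b, hb⟩ := Finite.exists_infinite_fiber fun n => (⟨φ n % p, Nat.mod_lt _ hp⟩ : Fin p)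
  have hfreq : ∃ᶠ n in atTop, φ n % p = b :=
    Nat.frequently_atTop_iff_infinite.2 <| (Set.infinite_coe_iff.1 hb).mono fun n hn =>
      by simpa [Fin.ext_iff] using hn
  have := Filter.frequently_iff_neBot.1 hfreq
  refine ⟨b, tendsto_nhds_unique (l := atTop ⊓ 𝓟 {n | φ n % p = b})
    (hz.mono_left inf_le_left) ?_⟩
  exact tendsto_comp_of_eventually_mod_eq hp (ha b) (hφ.tendsto_atTop.mono_left inf_le_left)
    (mem_inf_of_right (mem_principal_self _))

theorem wordAt_add (η : ℕ → ℕ) (t a b : ℕ) :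
    wordAt η t (a + b) = wordAt η t a ++ wordAt η (t + a) b := by
  simp [wordAt, List.range_add, Function.comp_def, add_assoc]

theorem wordAt_add_period {η : ℕ → ℕ} {p : ℕ} (hper : ∀ n, η (n + p) = η n) (t n : ℕ) :
    wordAt η (t + p) n = wordAt η t n :=
  List.map_congr_left fun m _ => by rw [add_right_comm, hper]

theorem length_wordAt (η : ℕ → ℕ) (t n : ℕ) : (wordAt η t n).length = n := by
  simp [wordAt]

namespace PCIM

variable (P : PCIM)

theorem c_mono {i j : ℕ} (hij : i ≤ j) (hj : j ≤ P.N) : P.c i ≤ P.c j :=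
  P.hc.monotoneOn (mem_Iic.2 (hij.trans hj)) (mem_Iic.2 hj) hij

theorem piece_subset_Icc {i : ℕ} (h1 : 1 ≤ i) (hN : i ≤ P.N) :
    P.piece i ⊆ Icc (P.c (i - 1)) (P.c i) := by
  have hle := P.c_mono (Nat.sub_le i 1) hN
  rintro y ((hy | hy) | hy)
  · exact Ioo_subset_Icc_self hy
  · split_ifs at hy with h
    · subst h; rw [mem_singleton_iff.1 hy]; exact ⟨le_rfl, hle⟩
    · exact hy.elim
  · split_ifs at hy with h
    · subst h; rw [mem_singleton_iff.1 hy]; exact ⟨hle, le_rfl⟩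
    · exact hy.elim

theorem piece_subset_X {i : ℕ} (h1 : 1 ≤ i) (hN : i ≤ P.N) : P.piece i ⊆ P.X :=
  (P.piece_subset_Icc h1 hN).trans <|
    Icc_subset_Icc (P.c_mono (Nat.zero_le _) ((Nat.sub_le i 1).trans hN)) (P.c_mono hN le_rfl)

theorem f_eq_fe {i : ℕ} (h1 : 1 ≤ i) (hN : i ≤ P.N) {y : ℝ} (hy : y ∈ P.piece i) :
    P.f y = P.fe i y := by
  rcases hy with (hy | hy) | hy
  · exact (P.hfe_eq i h1 hN y hy).symm
  · split_ifs at hy with h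
    · subst h; rw [mem_singleton_iff.1 hy]; exact P.hfe_left.symm
    · exact hy.elim
  · split_ifs at hy with h
    · subst h; rw [mem_singleton_iff.1 hy]; exact P.hfe_right.symm
    · exact hy.elim

theorem dist_f_le {i : ℕ} (h1 : 1 ≤ i) (hN : i ≤ P.N) {a b : ℝ} (ha : a ∈ P.piece i)
    (hb : b ∈ P.piece i) : dist (P.f a) (P.f b) ≤ P.lam * dist a b := by
  rw [P.f_eq_fe h1 hN ha, P.f_eq_fe h1 hN hb, Real.dist_eq, Real.dist_eq]
  exact P.hfe_lip i h1 hN a (P.piece_subset_Icc h1 hN ha) b (P.piece_subset_Icc h1 hN hb)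

theorem isBounded_of_subset_X {S : Set ℝ} (h : S ⊆ P.X) : Bornology.IsBounded S :=
  Metric.isBounded_Icc (P.c 0) (P.c P.N) |>.subset h

theorem Fmap_subset_X {i : ℕ} (h1 : 1 ≤ i) (hN : i ≤ P.N) (S : Set ℝ) : P.Fmap i S ⊆ P.X :=
  closure_minimal (image_subset_iff.2 fun _ ha => P.hmap (P.piece_subset_X h1 hN ha.2))
    isClosed_Icc

theorem Fmap_mono {i : ℕ} {S T : Set ℝ} (h : S ⊆ T) : P.Fmap i S ⊆ P.Fmap i T :=
  closure_mono (image_mono (inter_subset_inter_left _ h))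

theorem diam_Fmap_le {i : ℕ} (h1 : 1 ≤ i) (hN : i ≤ P.N) {S : Set ℝ} (hS : S ⊆ P.X) :
    Metric.diam (P.Fmap i S) ≤ P.lam * Metric.diam S := by
  rw [Fmap, Metric.diam_closure]
  refine Metric.diam_le_of_forall_dist_le (by have := P.hlam.1; positivity) ?_
  rintro _ ⟨a, ⟨haS, ha⟩, rfl⟩ _ ⟨b, ⟨hbS, hb⟩, rfl⟩
  exact (P.dist_f_le h1 hN ha hb).trans <| mul_le_mul_of_nonneg_left
    (Metric.dist_le_diam_of_mem (P.isBounded_of_subset_X hS) haS hbS) P.hlam.1.le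

theorem foldl_Fmap_mono (w : List ℕ) {S T : Set ℝ} (h : S ⊆ T) :
    w.foldl (fun S i => P.Fmap i S) S ⊆ w.foldl (fun S i => P.Fmap i S) T := by
  induction w generalizing S T with
  | nil => exact h
  | cons i w ih => exact ih (P.Fmap_mono h)

theorem foldl_Fmap_subset_X {w : List ℕ} (hw : ∀ i ∈ w, 1 ≤ i ∧ i ≤ P.N) {S : Set ℝ}
    (hS : S ⊆ P.X) : w.foldl (fun S i => P.Fmap i S) S ⊆ P.X := by
  induction w generalizing S with
  | nil => exact hS
  | cons i w ih =>
    have hi := hw i List.mem_cons_self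
    exact ih (fun j hj => hw j (List.mem_cons_of_mem _ hj)) (P.Fmap_subset_X hi.1 hi.2 S)

theorem diam_foldl_Fmap_le {w : List ℕ} (hw : ∀ i ∈ w, 1 ≤ i ∧ i ≤ P.N) {S : Set ℝ}
    (hS : S ⊆ P.X) :
    Metric.diam (w.foldl (fun S i => P.Fmap i S) S) ≤ P.lam ^ w.length * Metric.diam S := by
  induction w generalizing S with
  | nil => simp
  | cons i w ih =>
    have hi := hw i List.mem_cons_self
    calc Metric.diam (w.foldl (fun S i => P.Fmap i S) (P.Fmap i S))
        ≤ P.lam ^ w.length * Metric.diam (P.Fmap i S) :=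
          ih (fun j hj => hw j (List.mem_cons_of_mem _ hj)) (P.Fmap_subset_X hi.1 hi.2 S)
      _ ≤ P.lam ^ w.length * (P.lam * Metric.diam S) :=
          mul_le_mul_of_nonneg_left (P.diam_Fmap_le hi.1 hi.2 hS) (pow_nonneg P.hlam.1.le _)
      _ = P.lam ^ (i :: w).length * Metric.diam S := by
          rw [List.length_cons, pow_succ]; ring

theorem isClosed_foldl_Fmap (w : List ℕ) {S : Set ℝ} (hS : IsClosed S) :
    IsClosed (w.foldl (fun S i => P.Fmap i S) S) := by
  induction w generalizing S with
  | nil => exact hS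
  | cons i w ih => exact ih isClosed_closure

theorem atomOf_append (w v : List ℕ) :
    P.atomOf (w ++ v) = v.foldl (fun S i => P.Fmap i S) (P.atomOf w) :=
  List.foldl_append

theorem atomOf_subset_X {w : List ℕ} (hw : ∀ i ∈ w, 1 ≤ i ∧ i ≤ P.N) : P.atomOf w ⊆ P.X :=
  P.foldl_Fmap_subset_X hw subset_rfl

theorem atomOf_append_subset {w : List ℕ} (hw : ∀ i ∈ w, 1 ≤ i ∧ i ≤ P.N) (v : List ℕ) :
    P.atomOf (w ++ v) ⊆ P.atomOf v := by
  rw [atomOf_append]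
  exact P.foldl_Fmap_mono v (P.atomOf_subset_X hw)

theorem isClosed_atomOf (w : List ℕ) : IsClosed (P.atomOf w) :=
  P.isClosed_foldl_Fmap w isClosed_Icc

theorem diam_atomOf_le {w : List ℕ} (hw : ∀ i ∈ w, 1 ≤ i ∧ i ≤ P.N) :
    Metric.diam (P.atomOf w) ≤ P.lam ^ w.length * Metric.diam P.X :=
  P.diam_foldl_Fmap_le hw subset_rfl

section Itinerary

variable {P} {x : ℝ} {θ : ℕ → ℕ}

theorem IsItinerary.forall_mem_wordAt (hθ : P.IsItinerary x θ) (t n : ℕ) :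
    ∀ i ∈ wordAt θ t n, 1 ≤ i ∧ i ≤ P.N := by
  simp only [wordAt, List.mem_map, List.mem_range]
  rintro _ ⟨m, -, rfl⟩
  exact ⟨(hθ (t + m)).1, (hθ (t + m)).2.1⟩

theorem IsItinerary.iterate_mem_atomOf (hθ : P.IsItinerary x θ) (t n : ℕ) :
    P.f^[t + n] x ∈ P.atomOf (wordAt θ t n) := by
  induction n with
  | zero => exact P.piece_subset_X (hθ t).1 (hθ t).2.1 (hθ t).2.2
  | succ n ih =>
    rw [wordAt_add, atomOf_append, ← add_assoc, Function.iterate_succ_apply']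
    exact subset_closure ⟨_, ⟨ih, by simpa using (hθ (t + n)).2.2⟩, rfl⟩

theorem IsItinerary.tendsto_diam_atomOf (hθ : P.IsItinerary x θ) (t : ℕ) :
    Tendsto (fun n => Metric.diam (P.atomOf (wordAt θ t n))) atTop (𝓝 0) := by
  have hpow : Tendsto (fun n => P.lam ^ n * Metric.diam P.X) atTop (𝓝 0) := by
    simpa using (tendsto_pow_atTop_nhds_zero_of_lt_one P.hlam.1.le P.hlam.2).mul_const
      (Metric.diam P.X)
  refine squeeze_zero (fun _ => Metric.diam_nonneg) (fun n => ?_) hpow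
  simpa only [length_wordAt] using P.diam_atomOf_le (hθ.forall_mem_wordAt t n)

variable {p : ℕ}

theorem IsItinerary.antitone_atomOf_wordAt (hθ : P.IsItinerary x θ)
    (hper : ∀ n, θ (n + p) = θ n) (k : ℕ) :
    Antitone fun j => P.atomOf (wordAt θ k ((j + 1) * p)) := by
  refine antitone_nat_of_succ_le fun j => ?_
  rw [show (j + 1 + 1) * p = p + (j + 1) * p by ring, wordAt_add, wordAt_add_period hper]
  exact P.atomOf_append_subset (hθ.forall_mem_wordAt k p) _

theorem IsItinerary.exists_iInter_atomOf_eq_singleton (hθ : P.IsItinerary x θ) (hp : 0 < p)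
    (hper : ∀ n, θ (n + p) = θ n) (k : ℕ) :
    ∃ y, (⋂ j : ℕ, P.atomOf (wordAt θ k ((j + 1) * p))) = {y} ∧
      Tendsto (fun m => P.f^[k + m * p] x) atTop (𝓝 y) := by
  have hmono : StrictMono fun j : ℕ => (j + 1) * p := fun i j hij => Nat.mul_lt_mul_of_pos_right (by omega) hp
  obtain ⟨y, hy, hconv⟩ := exists_iInter_eq_singleton_of_tendsto_diam
    (hθ.antitone_atomOf_wordAt hper k) (fun j => P.isClosed_atomOf _)
    (fun j => P.isBounded_of_subset_X (P.atomOf_subset_X (hθ.forall_mem_wordAt k _)))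
    (fun j => hθ.iterate_mem_atomOf k ((j + 1) * p))
    ((hθ.tendsto_diam_atomOf k).comp hmono.tendsto_atTop)
  exact ⟨y, hy, (tendsto_add_atTop_iff_nat 1).1 hconv⟩

end Itinerary

theorem omega_eq_range_of_tendsto {x : ℝ} {p : ℕ} (hp : 0 < p) {xs : ℕ → ℝ}
    (hxs : ∀ k, Tendsto (fun m => P.f^[k + m * p] x) atTop (𝓝 (xs k))) :
    P.omega x = range fun k : Fin p => xs k := by
  ext z
  constructor
  · rintro ⟨φ, hφ, hz⟩
    obtain ⟨b, rfl⟩ := exists_eq_of_tendsto_comp_strictMono (u := fun n => P.f^[n] x) hp hxs hφ hz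
    exact ⟨b, rfl⟩
  · rintro ⟨k, rfl⟩
    refine ⟨fun m => k + (m + 1) * p, fun i j hij => Nat.add_lt_add_left (Nat.mul_lt_mul_of_pos_right (by omega) hp) k, ?_⟩
    exact (tendsto_add_atTop_iff_nat 1).2 (hxs k)

end PCIM

theorem stmt11_general (P : PCIM) (x : ℝ) (θ : ℕ → ℕ) (hθ : P.IsItinerary x θ) (p : ℕ) (hp : 1 ≤ p)
    (hperiodic : ∀ n, θ (n + p) = θ n) :
    ∃ xs : Fin p → ℝ,
      (∀ k : Fin p, (⋂ j : ℕ, P.atomOf (wordAt θ k ((j + 1) * p))) = {xs k}) ∧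
      P.omega x = Set.range xs := by
  choose xs hxs hlim using hθ.exists_iInter_atomOf_eq_singleton hp hperiodic
  exact ⟨fun k => xs k, fun k => hxs k, P.omega_eq_range_of_tendsto hp hlim⟩

/-- If `D ⊆ X̃` and `x ∈ X̃` has a periodic itinerary `θ` of period `p`, then `ω(x)`
is the finite set `{x₀*, …, x_{p-1}*}` where `x_k*` is the unique point of the nested
intersection of the atoms `A_{θ_k, …, θ_{k + j p - 1}}`, `j ≥ 1`. -/
theorem stmt11 (P : PCIM) (hD : P.D ⊆ P.Xt) (x : ℝ) (hx : x ∈ P.Xt)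
    (θ : ℕ → ℕ) (hθ : P.IsItinerary x θ) (p : ℕ) (hp : 1 ≤ p)
    (hperiodic : ∀ n, θ (n + p) = θ n) :
    ∃ xs : Fin p → ℝ,
      (∀ k : Fin p, (⋂ j : ℕ, P.atomOf (wordAt θ k ((j + 1) * p))) = {xs k}) ∧
      P.omega x = Set.range xs :=
  stmt11_general P x θ hθ p hp hperiodic
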